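/- arXiv:1407.7245 — 3 statements merged into one kernel-verified Lean document; each statement's English description precedes it below -/
import Mathlib

section
/- Let (X,d) be a metric space, S ⊆ X, and F : S → ℝ a K-Lipschitz function. Fix s ∈ S and x ∈ X with d(s,x) ≤ εK for some ε > 0. If s' ∈ S satisfies d(s,s') ≥ 4εK, then εF(s') + (1/2)d(s',x)² ≥ εF(s) + (1/2)d(s,x)². In particular any minimizer of G(s') = εF(s') + (1/2)d(s',x)² with G(s') < G(s) lies in the ball B(s, 4εK). -/
/-! Write `a = d(s,x) ≤ c := εK`, `b = d(s',x)` and `D = d(s,s') ≥ 4c`. The triangle inequality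
gives `b + a ≥ D` and `b - a ≥ D - 2a ≥ D - 2c ≥ 2c`, so the quadratic term grows by
`(b² - a²)/2 ≥ cD`, which dominates the possible decrease `ε(F s - F s') ≤ εK D = cD`
of the linear term. -/

theorem two_mul_mul_dist_le_dist_sq_sub_dist_sq {X : Type*} [PseudoMetricSpace X]
    {s s' x : X} {c : ℝ} (hx : dist s x ≤ c) (hs' : 4 * c ≤ dist s s') :
    2 * c * dist s s' ≤ dist s' x ^ 2 - dist s x ^ 2 := by
  have hsum : dist s s' ≤ dist s' x + dist s x := by
    simpa only [dist_comm x s', add_comm] using dist_triangle s x s'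
  have hdiff : 2 * c ≤ dist s' x - dist s x := by linarith
  have hc : 0 ≤ 2 * c := by linarith [dist_nonneg (x := s) (y := x)]
  calc 2 * c * dist s s' ≤ (dist s' x - dist s x) * (dist s' x + dist s x) :=
        mul_le_mul hdiff hsum dist_nonneg (hc.trans hdiff)
    _ = dist s' x ^ 2 - dist s x ^ 2 := by ring

theorem objective_le_of_le_dist {X : Type*} [PseudoMetricSpace X] {F : X → ℝ} {K ε : ℝ}
    (hε : 0 ≤ ε) {s s' x : X} (hF : F s - F s' ≤ K * dist s s') (hx : dist s x ≤ ε * K)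
    (hs' : 4 * (ε * K) ≤ dist s s') :
    ε * F s + (1/2) * dist s x ^ 2 ≤ ε * F s' + (1/2) * dist s' x ^ 2 := by
  have hquad := two_mul_mul_dist_le_dist_sq_sub_dist_sq hx hs'
  have hlin : ε * (F s - F s') ≤ ε * K * dist s s' := by
    rw [mul_assoc]
    exact mul_le_mul_of_nonneg_left hF hε
  linarith

theorem stmt1_general {X : Type*} [MetricSpace X] (S : Set X) (F : X → ℝ) (K ε : ℝ)
    (hε : 0 < ε)
    (hF : ∀ a ∈ S, ∀ b ∈ S, |F a - F b| ≤ K * dist a b)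
    (s : X) (hs : s ∈ S) (x : X) (hx : dist s x ≤ ε * K) :
    (∀ s' ∈ S, 4 * ε * K ≤ dist s s' →
      ε * F s + (1/2) * dist s x ^ 2 ≤ ε * F s' + (1/2) * dist s' x ^ 2) ∧
    (∀ s' ∈ S, ε * F s' + (1/2) * dist s' x ^ 2 < ε * F s + (1/2) * dist s x ^ 2 →
      dist s s' < 4 * ε * K) := by
  have far : ∀ s' ∈ S, 4 * ε * K ≤ dist s s' →
      ε * F s + (1/2) * dist s x ^ 2 ≤ ε * F s' + (1/2) * dist s' x ^ 2 := by
    intro s' hs' hd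
    exact objective_le_of_le_dist hε.le (le_of_abs_le (hF s hs s' hs')) hx
      (by rwa [← mul_assoc])
  refine ⟨far, fun s' hs' hlt => ?_⟩
  by_contra! hd
  exact (far s' hs' hd).not_gt hlt

/-- If `F : S → ℝ` is `K`-Lipschitz on `S ⊆ X`, `s ∈ S`, and `dist s x ≤ ε K`,
then any `s' ∈ S` with `dist s s' ≥ 4εK` satisfies
`ε F(s') + ½ d(s',x)² ≥ ε F(s) + ½ d(s,x)²`; in particular any minimizer `s'` of
`G(s') = ε F(s') + ½ d(s',x)²` with `G(s') < G(s)` lies in the ball `B(s, 4εK)`. -/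
theorem stmt1 {X : Type*} [MetricSpace X] (S : Set X) (F : X → ℝ) (K ε : ℝ)
    (hK : 0 ≤ K) (hε : 0 < ε)
    (hF : ∀ a ∈ S, ∀ b ∈ S, |F a - F b| ≤ K * dist a b)
    (s : X) (hs : s ∈ S) (x : X) (hx : dist s x ≤ ε * K) :
    (∀ s' ∈ S, 4 * ε * K ≤ dist s s' →
      ε * F s + (1/2) * dist s x ^ 2 ≤ ε * F s' + (1/2) * dist s' x ^ 2) ∧
    (∀ s' ∈ S, ε * F s' + (1/2) * dist s' x ^ 2 < ε * F s + (1/2) * dist s x ^ 2 →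
      dist s s' < 4 * ε * K) :=
  stmt1_general S F K ε hε hF s hs x hx
end

section
/- Let (X,d) be a metric space, S ⊆ X, f : S → ℝ a K-Lipschitz function, t > 0, L > 0, and x ∈ X with d(s,x) ≤ tL for a fixed s ∈ S. If s' ∈ S satisfies d(s,s') ≥ t(2K+2L), then (1/2)d(s',x)² − (1/2)d(s,x)² ≥ t(f(s) − f(s')). Consequently, any minimizer s' of G(s') = t f(s') + (1/2)d(s',x)² with G(s') < G(s) satisfies d(s,s') < t(2K+2L). -/
/-!
With `D = dist s s'`, the reverse triangle inequality `|D - dist s x| ≤ dist s' x` gives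
`dist s' x ^ 2 - dist s x ^ 2 ≥ D (D - 2 dist s x)`, which is at least `2 t K D` once
`dist s x ≤ t L` and `D ≥ t (2K + 2L)`; the Lipschitz bound caps `t (f s - f s')` by `t K D`.
-/

theorem dist_mul_sub_two_dist_le_sq_dist_sub_sq_dist {X : Type*} [PseudoMetricSpace X]
    (s s' x : X) :
    dist s s' * (dist s s' - 2 * dist s x) ≤ dist s' x ^ 2 - dist s x ^ 2 := by
  have h : (dist s s' - dist s x) ^ 2 ≤ dist s' x ^ 2 := by
    rw [sq_le_sq, abs_of_nonneg dist_nonneg, dist_comm s s', dist_comm s x]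
    exact abs_dist_sub_le s' x s
  nlinarith

theorem mul_sub_le_half_sq_dist_sub_half_sq_dist {X : Type*} [PseudoMetricSpace X]
    {f : X → ℝ} {K t L : ℝ} {s s' x : X} (ht : 0 ≤ t)
    (hf : |f s - f s'| ≤ K * dist s s') (hx : dist s x ≤ t * L)
    (hfar : t * (2 * K + 2 * L) ≤ dist s s') :
    t * (f s - f s') ≤ (1/2) * dist s' x ^ 2 - (1/2) * dist s x ^ 2 := by
  have hlip : t * (f s - f s') ≤ t * (K * dist s s') :=
    mul_le_mul_of_nonneg_left ((le_abs_self _).trans hf) ht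
  have hgap : 2 * (t * K) ≤ dist s s' - 2 * dist s x := by linarith
  have hsq : dist s s' * (2 * (t * K)) ≤ dist s s' * (dist s s' - 2 * dist s x) :=
    mul_le_mul_of_nonneg_left hgap dist_nonneg
  linarith [dist_mul_sub_two_dist_le_sq_dist_sub_sq_dist s s' x]

theorem stmt2_general {X : Type*} [MetricSpace X] (S : Set X) (f : X → ℝ) (K t L : ℝ)
    (ht : 0 < t)
    (hf : ∀ a ∈ S, ∀ b ∈ S, |f a - f b| ≤ K * dist a b)
    (s : X) (hs : s ∈ S) (x : X) (hx : dist s x ≤ t * L) :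
    (∀ s' ∈ S, t * (2 * K + 2 * L) ≤ dist s s' →
      t * (f s - f s') ≤ (1/2) * dist s' x ^ 2 - (1/2) * dist s x ^ 2) ∧
    (∀ s' ∈ S, t * f s' + (1/2) * dist s' x ^ 2 < t * f s + (1/2) * dist s x ^ 2 →
      dist s s' < t * (2 * K + 2 * L)) := by
  have far : ∀ s' ∈ S, t * (2 * K + 2 * L) ≤ dist s s' →
      t * (f s - f s') ≤ (1/2) * dist s' x ^ 2 - (1/2) * dist s x ^ 2 := fun s' hs' hfar =>
    mul_sub_le_half_sq_dist_sub_half_sq_dist ht.le (hf s hs s' hs') hx hfar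
  refine ⟨far, fun s' hs' hbetter => ?_⟩
  by_contra hnear
  linarith [far s' hs' (not_lt.mp hnear)]

/-- If `f : S → ℝ` is `K`-Lipschitz on `S ⊆ X`, `t, L > 0`, `s ∈ S`,
`dist s x ≤ t L`, then any `s' ∈ S` with `dist s s' ≥ t(2K+2L)` satisfies
`½ d(s',x)² − ½ d(s,x)² ≥ t (f(s) − f(s'))`; consequently any minimizer `s'` of
`G(s') = t f(s') + ½ d(s',x)²` with `G(s') < G(s)` satisfies `dist s s' < t(2K+2L)`. -/
theorem stmt2 {X : Type*} [MetricSpace X] (S : Set X) (f : X → ℝ) (K t L : ℝ)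
    (hK : 0 ≤ K) (ht : 0 < t) (hL : 0 < L)
    (hf : ∀ a ∈ S, ∀ b ∈ S, |f a - f b| ≤ K * dist a b)
    (s : X) (hs : s ∈ S) (x : X) (hx : dist s x ≤ t * L) :
    (∀ s' ∈ S, t * (2 * K + 2 * L) ≤ dist s s' →
      t * (f s - f s') ≤ (1/2) * dist s' x ^ 2 - (1/2) * dist s x ^ 2) ∧
    (∀ s' ∈ S, t * f s' + (1/2) * dist s' x ^ 2 < t * f s + (1/2) * dist s x ^ 2 →
      dist s s' < t * (2 * K + 2 * L)) :=
  stmt2_general S f K t L ht hf s hs x hx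
end

section
/- Let M be a compact Riemannian manifold, γ : [0,1] → M a geodesic lying in the interior of a minimizing geodesic, and Π : T_{γ(1)}M → T_{γ(0)}M the reverse Riemannian parallel transport along γ. For Q ∈ ℕ, set γ_i(u) = γ((i+u)/Q) and define P_i : T_{γ_i(1)}M → T_{γ_i(0)}M as P_i = (d exp_{γ_i(0)})^{-1} composed appropriately, i.e., P_i(v) = j_v'(0) where j_v is the Jacobi field along γ_i with j_v(0)=0, j_v(1)=v. Then lim_{Q→∞} P_0 ∘ P_1 ∘ ⋯ ∘ P_{Q−1} = Π in operator norm. -/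
/-! In the parallel frame the Jacobi equation on the `i`-th piece reads `j'' = ρ j` with
`‖ρ‖ ≤ C / Q²`. Shooting from `j 0 = 0`, `j' 0 = w` is a Volterra fixed-point problem whose
operator has norm at most `sup ‖ρ‖`, so by a Neumann series the shooting map `w ↦ j 1` lies
within `2 C / Q²` of the identity, and `P Q i`, its inverse, within `4 C / Q²`. A product of `Q`
factors, each within `δ` of the identity, lies within `(1 + δ) ^ Q - 1` of it, and
`(1 + 4 C / Q²) ^ Q - 1 ≤ exp (4 C / Q) - 1 → 0`. -/

open Filter Set intervalIntegral
open scoped Topology unitInterval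

namespace NormedRing

variable {R : Type*} [NormedRing R] [HasSummableGeomSeries R]

theorem isUnit_of_norm_one_sub_lt_one {x : R} (hx : ‖1 - x‖ < 1) :
    IsUnit x :=
  sub_sub_self 1 x ▸ (Units.oneSub (1 - x) hx).isUnit

theorem norm_inverse_sub_one_le {x : R} {δ : ℝ}
    (hx : ‖1 - x‖ ≤ δ) (hδ : δ ≤ 1 / 2) : ‖Ring.inverse x - 1‖ ≤ 2 * δ := by
  have hunit := isUnit_of_norm_one_sub_lt_one (hx.trans_lt (by linarith))
  have hdecomp : Ring.inverse x - 1 = (Ring.inverse x - 1) * (1 - x) + (1 - x) := by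
    rw [sub_one_mul, mul_sub, mul_one, Ring.inverse_mul_cancel x hunit]
    abel
  have h : ‖Ring.inverse x - 1‖ ≤ ‖Ring.inverse x - 1‖ * δ + δ :=
    calc ‖Ring.inverse x - 1‖ ≤ ‖(Ring.inverse x - 1) * (1 - x)‖ + ‖1 - x‖ := by
          nth_rw 1 [hdecomp]; exact norm_add_le _ _
      _ ≤ ‖Ring.inverse x - 1‖ * ‖1 - x‖ + ‖1 - x‖ := by grw [norm_mul_le]
      _ ≤ ‖Ring.inverse x - 1‖ * δ + δ := by gcongr
  nlinarith [norm_nonneg (Ring.inverse x - 1), (norm_nonneg (1 - x)).trans hx]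

end NormedRing

theorem List.norm_prod_sub_one_le {R : Type*} [NormedRing R] {δ : ℝ} :
    ∀ {l : List R}, (∀ a ∈ l, ‖a - 1‖ ≤ δ) → ‖l.prod - 1‖ ≤ (1 + δ) ^ l.length - 1
  | [], _ => by simp
  | a :: l, h => by
    have ha := h a mem_cons_self
    have hl := norm_prod_sub_one_le fun b hb => h b (mem_cons_of_mem a hb)
    have hδ : 0 ≤ δ := (norm_nonneg _).trans ha
    calc ‖(a :: l).prod - 1‖ = ‖(a - 1) * (l.prod - 1) + (a - 1) + (l.prod - 1)‖ := by
          rw [prod_cons]; congr 1; noncomm_ring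
      _ ≤ ‖a - 1‖ * ‖l.prod - 1‖ + ‖a - 1‖ + ‖l.prod - 1‖ :=
          (norm_add₃_le).trans (by gcongr; exact norm_mul_le _ _)
      _ ≤ δ * ((1 + δ) ^ l.length - 1) + δ + ((1 + δ) ^ l.length - 1) := by
          gcongr
      _ = (1 + δ) ^ (a :: l).length - 1 := by rw [length_cons, pow_succ]; ring

theorem ContinuousLinearMap.foldr_comp_id_eq_prod {R M ι : Type*} [Semiring R]
    [TopologicalSpace M] [AddCommMonoid M] [Module R M] (f : ι → M →L[R] M) (l : List ι) :
    l.foldr (fun i acc => (f i).comp acc) (ContinuousLinearMap.id R M) = (l.map f).prod := by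
  induction l with
  | nil => rfl
  | cons i l ih => rw [List.foldr_cons, ih, List.map_cons, List.prod_cons]; rfl

section SecondOrderIVP

variable {E : Type*} [NormedAddCommGroup E] [NormedSpace ℝ E] {ψ : ℝ → E}

/-- Cauchy's formula for repeated integration: the solution of `j'' = ψ`, `j 0 = 0`,
`j' 0 = w`. -/
noncomputable def ivpSolution (w : E) (ψ : ℝ → E) (t : ℝ) : E :=
  t • w + ∫ s in (0:ℝ)..t, (t - s) • ψ s

@[simp]
theorem ivpSolution_apply_zero (w : E) (ψ : ℝ → E) : ivpSolution w ψ 0 = 0 := by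
  simp [ivpSolution]

theorem ivpSolution_eq_smul_add (w : E) (ψ : ℝ → E) (t : ℝ) :
    ivpSolution w ψ t = t • w + ivpSolution 0 ψ t := by
  simp [ivpSolution]

theorem ivpSolution_zero_add {φ : ℝ → E} (hψ : Continuous ψ) (hφ : Continuous φ) (t : ℝ) :
    ivpSolution 0 (ψ + φ) t = ivpSolution 0 ψ t + ivpSolution 0 φ t := by
  simp only [ivpSolution, smul_zero, zero_add, Pi.add_apply, smul_add]
  exact integral_add (((continuous_const.sub continuous_id).smul hψ).intervalIntegrable _ _)
    (((continuous_const.sub continuous_id).smul hφ).intervalIntegrable _ _)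

theorem ivpSolution_zero_smul (c : ℝ) (ψ : ℝ → E) (t : ℝ) :
    ivpSolution 0 (c • ψ) t = c • ivpSolution 0 ψ t := by
  simp only [ivpSolution, smul_zero, zero_add, Pi.smul_apply, smul_comm _ c, integral_smul]

theorem norm_ivpSolution_zero_le {M : ℝ} (hψ : ∀ s ∈ I, ‖ψ s‖ ≤ M) {t : ℝ} (ht : t ∈ I) :
    ‖ivpSolution 0 ψ t‖ ≤ M := by
  have hM : 0 ≤ M := (norm_nonneg _).trans (hψ 0 unitInterval.zero_mem)
  have hbound : ∀ s ∈ uIoc (0:ℝ) t, ‖(t - s) • ψ s‖ ≤ M := by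
    intro s hs
    rw [uIoc_of_le ht.1] at hs
    rw [norm_smul, Real.norm_of_nonneg (by linarith [hs.2])]
    exact (mul_le_mul (by linarith [hs.1, ht.2]) (hψ s ⟨hs.1.le, hs.2.trans ht.2⟩) (norm_nonneg _)
      zero_le_one).trans_eq (one_mul M)
  calc ‖ivpSolution 0 ψ t‖ ≤ M * |t - 0| := by
        simpa [ivpSolution] using norm_integral_le_of_norm_le_const hbound
    _ ≤ M := mul_le_of_le_one_right hM (by rw [sub_zero, abs_of_nonneg ht.1]; exact ht.2)

variable [CompleteSpace E]

theorem hasDerivAt_ivpSolution (hψ : Continuous ψ) (w : E) (t : ℝ) :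
    HasDerivAt (ivpSolution w ψ) (w + ∫ s in (0:ℝ)..t, ψ s) t := by
  have hsψ : Continuous fun s : ℝ => s • ψ s := continuous_id.smul hψ
  have hsplit : ivpSolution w ψ =
      fun t => t • w + (t • ∫ s in (0:ℝ)..t, ψ s) - ∫ s in (0:ℝ)..t, s • ψ s := by
    ext t
    simp only [ivpSolution, sub_smul]
    rw [integral_sub (f := fun s => t • ψ s) ((hψ.const_smul t).intervalIntegrable _ _)
      (hsψ.intervalIntegrable _ _),
      integral_smul, add_sub_assoc]
  have h : HasDerivAt
      (fun t => t • w + (t • ∫ s in (0:ℝ)..t, ψ s) - ∫ s in (0:ℝ)..t, s • ψ s)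
      ((1:ℝ) • w + (t • ψ t + (1:ℝ) • ∫ s in (0:ℝ)..t, ψ s) - t • ψ t) t :=
    (((hasDerivAt_id t).smul_const w).add ((hasDerivAt_id t).smul
      (hψ.integral_hasStrictDerivAt 0 t).hasDerivAt)).sub
      (hsψ.integral_hasStrictDerivAt 0 t).hasDerivAt
  rw [hsplit]
  convert h using 1
  simp only [one_smul]
  abel

theorem deriv_ivpSolution (hψ : Continuous ψ) (w : E) :
    deriv (ivpSolution w ψ) = fun t => w + ∫ s in (0:ℝ)..t, ψ s :=
  funext fun t => (hasDerivAt_ivpSolution hψ w t).deriv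

theorem deriv_ivpSolution_zero (hψ : Continuous ψ) (w : E) :
    deriv (ivpSolution w ψ) 0 = w := by
  simp [deriv_ivpSolution hψ]

theorem deriv_deriv_ivpSolution (hψ : Continuous ψ) (w : E) :
    deriv (deriv (ivpSolution w ψ)) = ψ := by
  rw [deriv_ivpSolution hψ]
  ext t
  exact ((hψ.integral_hasStrictDerivAt 0 t).hasDerivAt.const_add w).deriv

theorem contDiff_ivpSolution (hψ : Continuous ψ) (w : E) : ContDiff ℝ 2 (ivpSolution w ψ) := by
  rw [show (2 : WithTop ℕ∞) = 1 + 1 from rfl, contDiff_succ_iff_deriv, contDiff_one_iff_deriv,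
    deriv_deriv_ivpSolution hψ, deriv_ivpSolution hψ]
  exact ⟨fun t => (hasDerivAt_ivpSolution hψ w t).differentiableAt, by simp, fun t =>
    ((hψ.integral_hasStrictDerivAt 0 t).hasDerivAt.const_add w).differentiableAt, hψ⟩

end SecondOrderIVP

namespace unitInterval

variable {E : Type*} [NormedAddCommGroup E] [NormedSpace ℝ E]

theorem norm_coe_smul_le (t : I) (w : E) : ‖(t : ℝ) • w‖ ≤ ‖w‖ := by
  simpa [norm_smul, abs_of_nonneg t.2.1] using mul_le_of_le_one_left (norm_nonneg w) t.2.2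

noncomputable def smulCLM : E →L[ℝ] C(I, E) :=
  LinearMap.mkContinuous
    { toFun := fun w => ⟨fun t => (t : ℝ) • w, by fun_prop⟩
      map_add' := fun v w => by ext; simp
      map_smul' := fun c w => by ext; simp [smul_comm c] }
    1 fun w => by
      simpa using (ContinuousMap.norm_le _ (norm_nonneg w)).2 fun t => norm_coe_smul_le t w

@[simp]
theorem smulCLM_apply (w : E) (t : I) : smulCLM w t = (t : ℝ) • w := rfl

theorem norm_smulCLM_apply_le (w : E) : ‖smulCLM w‖ ≤ ‖w‖ :=
  (ContinuousMap.norm_le _ (norm_nonneg w)).2 fun t => norm_coe_smul_le t w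

end unitInterval

section Shooting

variable {E : Type*} [NormedAddCommGroup E] [NormedSpace ℝ E] {ρ : ℝ → E →L[ℝ] E}

theorem continuous_apply_IccExtend (hρ : Continuous ρ) (f : C(I, E)) :
    Continuous fun s => ρ s (IccExtend zero_le_one f s) :=
  hρ.clm_apply f.continuous.Icc_extend'

variable [CompleteSpace E]

noncomputable def volterraAux (hρ : Continuous ρ) (f : C(I, E)) : C(I, E) :=
  ⟨fun t => ivpSolution 0 (fun s => ρ s (IccExtend zero_le_one f s)) t,
    (contDiff_ivpSolution (continuous_apply_IccExtend hρ f) 0).continuous.comp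
      continuous_subtype_val⟩

theorem norm_volterraAux_le (hρ : Continuous ρ) {C : ℝ} (hC : ∀ s ∈ I, ‖ρ s‖ ≤ C)
    (f : C(I, E)) : ‖volterraAux hρ f‖ ≤ C * ‖f‖ := by
  have hC0 : 0 ≤ C := (norm_nonneg _).trans (hC 0 unitInterval.zero_mem)
  refine (ContinuousMap.norm_le _ (by positivity)).2 fun t => norm_ivpSolution_zero_le
    (fun s hs => ?_) t.2
  calc ‖ρ s (IccExtend zero_le_one f s)‖ ≤ ‖ρ s‖ * ‖IccExtend zero_le_one f s‖ :=
        (ρ s).le_opNorm _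
    _ ≤ C * ‖f‖ := by
        gcongr
        · exact hC s hs
        · exact f.norm_coe_le_norm _

/-- A solution of `j'' = ρ j`, `j 0 = 0`, `j' 0 = w` on `[0, 1]` is a fixed point of
`f ↦ (t ↦ t • w) + volterra hρ f`. -/
noncomputable def volterra (hρ : Continuous ρ) : C(I, E) →L[ℝ] C(I, E) :=
  LinearMap.mkContinuousOfExistsBound
    { toFun := volterraAux hρ
      map_add' := fun f g => by
        ext t
        refine Eq.trans ?_ (ivpSolution_zero_add (continuous_apply_IccExtend hρ f)
          (continuous_apply_IccExtend hρ g) t)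
        simp [volterraAux, IccExtend_apply, Pi.add_def]
      map_smul' := fun c f => by
        ext t
        refine Eq.trans ?_ (ivpSolution_zero_smul c _ t)
        simp [volterraAux, IccExtend_apply, Pi.smul_def] }
    (by
      obtain ⟨C, hC⟩ := isCompact_Icc.exists_bound_of_continuousOn hρ.continuousOn
      exact ⟨C, norm_volterraAux_le hρ hC⟩)

theorem volterra_apply (hρ : Continuous ρ) (f : C(I, E)) (t : I) :
    volterra hρ f t = ivpSolution 0 (fun s => ρ s (IccExtend zero_le_one f s)) t := rfl

theorem norm_volterra_le (hρ : Continuous ρ) {C : ℝ} (hC : ∀ s ∈ I, ‖ρ s‖ ≤ C) :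
    ‖volterra hρ‖ ≤ C :=
  ContinuousLinearMap.opNorm_le_bound _ ((norm_nonneg _).trans (hC 0 unitInterval.zero_mem))
    (norm_volterraAux_le hρ hC)

/-- `w ↦ j 1`, where `j'' = ρ j`, `j 0 = 0`, `j' 0 = w`. -/
noncomputable def shootingMap (hρ : Continuous ρ) : E →L[ℝ] E :=
  ContinuousMap.evalCLM ℝ (1 : I) ∘L Ring.inverse (1 - volterra hρ) ∘L unitInterval.smulCLM

theorem exists_ivpSolution_shootingMap (hρ : Continuous ρ) (hK : ‖volterra hρ‖ < 1) (w : E) :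
    ∃ j : ℝ → E, ContDiff ℝ 2 j ∧ (∀ u ∈ I, deriv (deriv j) u = ρ u (j u)) ∧
      j 0 = 0 ∧ deriv j 0 = w ∧ j 1 = shootingMap hρ w := by
  set f := Ring.inverse (1 - volterra hρ) (unitInterval.smulCLM w)
  have hunit : IsUnit (1 - volterra hρ) :=
    NormedRing.isUnit_of_norm_one_sub_lt_one (x := 1 - volterra hρ) (by rwa [sub_sub_cancel])
  have hf : f = unitInterval.smulCLM w + volterra hρ f := by
    have h := congr($(Ring.mul_inverse_cancel _ hunit) (unitInterval.smulCLM w))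
    simp only [mul_apply_eq_comp, sub_apply, one_apply_eq_self] at h
    exact sub_eq_iff_eq_add.mp h
  have hψ := continuous_apply_IccExtend hρ f
  have hj : ∀ t (ht : t ∈ I), ivpSolution w _ t = f ⟨t, ht⟩ := fun t ht => by
    rw [hf, ivpSolution_eq_smul_add, ContinuousMap.add_apply, volterra_apply,
      unitInterval.smulCLM_apply]
  refine ⟨ivpSolution w _, contDiff_ivpSolution hψ w, fun u hu => ?_, ivpSolution_apply_zero _ _,
    deriv_ivpSolution_zero hψ w, hj 1 unitInterval.one_mem⟩
  rw [deriv_deriv_ivpSolution hψ, hj u hu, ← IccExtend_of_mem zero_le_one f hu]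

theorem norm_shootingMap_sub_one_le (hρ : Continuous ρ) {δ : ℝ} (hC : ∀ s ∈ I, ‖ρ s‖ ≤ δ)
    (hδ : δ ≤ 1 / 2) : ‖shootingMap hρ - 1‖ ≤ 2 * δ := by
  have hinv : ‖Ring.inverse (1 - volterra hρ) - 1‖ ≤ 2 * δ :=
    NormedRing.norm_inverse_sub_one_le (x := 1 - volterra hρ)
      (by rw [sub_sub_cancel]; exact norm_volterra_le hρ hC) hδ
  have hδ0 : 0 ≤ δ := (norm_nonneg _).trans (hC 0 unitInterval.zero_mem)
  refine ContinuousLinearMap.opNorm_le_bound _ (by positivity) fun w => ?_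
  have hw : (shootingMap hρ - 1) w = ((Ring.inverse (1 - volterra hρ) - 1)
      (unitInterval.smulCLM w)) 1 := by
    simp [shootingMap]
  calc ‖(shootingMap hρ - 1) w‖
        ≤ ‖(Ring.inverse (1 - volterra hρ) - 1) (unitInterval.smulCLM w)‖ :=
        hw ▸ ContinuousMap.norm_coe_le_norm _ _
    _ ≤ 2 * δ * ‖w‖ := by
        grw [ContinuousLinearMap.le_opNorm, hinv, unitInterval.norm_smulCLM_apply_le]

theorem eq_inverse_shootingMap (hρ : Continuous ρ) (hK : ‖volterra hρ‖ < 1)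
    (hS : IsUnit (shootingMap hρ)) {T : E →L[ℝ] E}
    (hT : ∀ v j, ContDiff ℝ 2 j → (∀ u ∈ I, deriv (deriv j) u = ρ u (j u)) → j 0 = 0 →
      j 1 = v → T v = deriv j 0) :
    T = Ring.inverse (shootingMap hρ) := by
  ext v
  obtain ⟨j, hj, hode, hj0, hdj0, hj1⟩ :=
    exists_ivpSolution_shootingMap hρ hK (Ring.inverse (shootingMap hρ) v)
  refine (hT v j hj hode hj0 (hj1.trans ?_)).trans hdj0
  rw [← mul_apply_eq_comp, Ring.mul_inverse_cancel _ hS, one_apply_eq_self]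

theorem norm_sub_one_le_of_forall_ivp (hρ : Continuous ρ) {δ : ℝ} (hC : ∀ s ∈ I, ‖ρ s‖ ≤ δ)
    (hδ : δ ≤ 1 / 4) {T : E →L[ℝ] E}
    (hT : ∀ v j, ContDiff ℝ 2 j → (∀ u ∈ I, deriv (deriv j) u = ρ u (j u)) → j 0 = 0 →
      j 1 = v → T v = deriv j 0) :
    ‖T - 1‖ ≤ 4 * δ := by
  have hS : ‖1 - shootingMap hρ‖ ≤ 2 * δ :=
    norm_sub_rev (shootingMap hρ) 1 ▸ norm_shootingMap_sub_one_le hρ hC (by linarith)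
  rw [eq_inverse_shootingMap hρ ((norm_volterra_le hρ hC).trans_lt (by linarith))
    (NormedRing.isUnit_of_norm_one_sub_lt_one (by linarith)) hT]
  linarith [NormedRing.norm_inverse_sub_one_le hS (by linarith)]

end Shooting

theorem Real.one_add_div_sq_pow_le_exp {a : ℝ} (ha : 0 ≤ a) (n : ℕ) :
    (1 + a / (n : ℝ) ^ 2) ^ n ≤ Real.exp (a / n) := by
  calc (1 + a / (n : ℝ) ^ 2) ^ n ≤ Real.exp (a / (n : ℝ) ^ 2) ^ n := by
        gcongr
        linarith [Real.add_one_le_exp (a / (n : ℝ) ^ 2)]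
    _ = Real.exp (a / n) := by
        rw [← Real.exp_nat_mul]
        rcases eq_or_ne (n : ℝ) 0 with hn | hn
        · simp [hn]
        · field_simp

theorem add_div_mem_unitInterval {i Q : ℕ} (hi : i < Q) {s : ℝ} (hs : s ∈ I) :
    (i + s) / Q ∈ I :=
  have hiQ : (i : ℝ) + 1 ≤ Q := by exact_mod_cast hi
  unitInterval.div_mem (by linarith [hs.1, Nat.cast_nonneg (α := ℝ) i]) Q.cast_nonneg
    (by linarith [hs.2])

/-- Let `γ : [0,1] → M` be a geodesic inside the interior of a minimizing
geodesic. Trivializing the tangent bundle along `γ` by Riemannian parallel transport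
identifies all tangent spaces with a single inner product space `E`, turns the reverse
parallel transport `Π` into the identity map, and turns the Jacobi equation along
`γ_i(u) = γ((i+u)/Q)` into `j'' + Q⁻² R((i+u)/Q) j = 0`, where `R : ℝ → E →L[ℝ] E` is the
(continuous, self-adjoint) curvature operator `R(·, γ')γ'` along `γ`. The approximate
transports `P Q i : E →L[ℝ] E` are characterized by `P Q i v = j'(0)` for the Jacobi field
`j` along `γ_i` with `j(0) = 0`, `j(1) = v` (no conjugate points, so `j` is unique). Then
`P 0 ∘ P 1 ∘ ⋯ ∘ P (Q−1) → Π = id` in operator norm as `Q → ∞`. -/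
theorem stmt13 {E : Type*} [NormedAddCommGroup E] [InnerProductSpace ℝ E]
    [FiniteDimensional ℝ E]
    (R : ℝ → E →L[ℝ] E) (hR : Continuous R)
    (P : ℕ → ℕ → E →L[ℝ] E)
    (hP : ∀ Q : ℕ, 0 < Q → ∀ i : ℕ, i < Q → ∀ v : E, ∀ j : ℝ → E,
      ContDiff ℝ 2 j →
      (∀ u ∈ Set.Icc (0:ℝ) 1,
        deriv (deriv j) u + ((Q : ℝ) ^ 2)⁻¹ • R ((i + u) / Q) (j u) = 0) →
      j 0 = 0 → j 1 = v → P Q i v = deriv j 0) :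
    Tendsto
      (fun Q : ℕ =>
        ‖(List.range Q).foldr (fun i acc => (P Q i).comp acc)
            (ContinuousLinearMap.id ℝ E)
          - ContinuousLinearMap.id ℝ E‖)
      atTop (𝓝 0) := by
  obtain ⟨C, hC⟩ := isCompact_Icc.exists_bound_of_continuousOn (hR.continuousOn (s := I))
  have hC0 : 0 ≤ C := (norm_nonneg _).trans (hC 0 unitInterval.zero_mem)
  have hsmall : ∀ᶠ Q : ℕ in atTop, C / (Q : ℝ) ^ 2 < 1 / 4 :=
    (tendsto_const_nhds.div_atTop ((tendsto_pow_atTop two_ne_zero).comp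
      tendsto_natCast_atTop_atTop)).eventually (gt_mem_nhds (by norm_num))
  have hPQ : ∀ᶠ Q : ℕ in atTop, ∀ i < Q, ‖P Q i - 1‖ ≤ 4 * (C / (Q : ℝ) ^ 2) := by
    filter_upwards [hsmall, eventually_gt_atTop 0] with Q hQ hQ0 i hi
    refine norm_sub_one_le_of_forall_ivp (ρ := fun s => -((Q : ℝ) ^ 2)⁻¹ • R ((i + s) / Q))
      (by fun_prop) (fun s hs => ?_) hQ.le fun v j hj hode => hP Q hQ0 i hi v j hj
        (fun u hu => by simp [hode u hu])
    rw [norm_smul, norm_neg, norm_inv, norm_pow, Real.norm_natCast, div_eq_inv_mul C]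
    gcongr
    exact hC _ (add_div_mem_unitInterval hi hs)
  refine squeeze_zero' (Eventually.of_forall fun Q => norm_nonneg _) ?_
    (by simpa using ((Real.continuous_exp.tendsto 0).comp
      (tendsto_const_div_atTop_nhds_zero_nat (4 * C))).sub_const 1)
  filter_upwards [hPQ] with Q hQ
  rw [ContinuousLinearMap.foldr_comp_id_eq_prod]
  calc ‖((List.range Q).map (P Q)).prod - 1‖ ≤ (1 + 4 * (C / (Q : ℝ) ^ 2)) ^ Q - 1 := by
        simpa using List.norm_prod_sub_one_le (l := (List.range Q).map (P Q)) (by simpa using hQ)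
    _ ≤ Real.exp (4 * C / Q) - 1 := by
        rw [← mul_div_assoc]
        linarith [Real.one_add_div_sq_pow_le_exp (by positivity : 0 ≤ 4 * C) Q]
end
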